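/- Convex approximation bound: Let B ⊆ ℝ^d, fix c ∈ d·CH(B), and suppose a point s ∈ ℝ^d satisfies s ∈ d·CH(B) − c (i.e., s + c ∈ d·CH(B)). Then for every v ∈ CH(B) there exists u ∈ B such that s + v − u ∈ d·CH(B) − c. Consequently, Player A wins the convex approximation game for B with error margin d·CH(B) + {−c}: for any sequence v₀, v₁, … ∈ CH(B) there exist u₀, u₁, … ∈ B (each uⱼ depending only on v₀,…,vⱼ) such that for all j, Σ_{i=0}^{j} (vᵢ − uᵢ) ∈ d·CH(B) + {−c}. -/

import Mathlib

/-!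
By Carathéodory, a point `x` of the convex hull of `B` in dimension `d` is a convex combination
of at most `d + 1` points of `B`, so one of them, `u`, carries weight at least `1 / (d + 1)`;
taking `u` out of `(d + 1) • x` leaves a nonnegative combination of total weight `d`. Hence
`B + d • CH(B) = (d + 1) • CH(B)`. If `s + c ∈ d • CH(B)` and `v ∈ CH(B)`, then
`s + c + v ∈ (d + 1) • CH(B)` splits as `u + w` with `u ∈ B`, `w ∈ d • CH(B)`, and `w` is the new
`s + c`. Player A keeps the invariant `s + c ∈ d • CH(B)` for the running error `s` by answering
each move this way, starting from `s = 0`, which is allowed by `c ∈ d • CH(B)`.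
-/

open Pointwise

section Convex

variable {𝕜 E ι : Type*} [Field 𝕜] [LinearOrder 𝕜] [IsStrictOrderedRing 𝕜]
  [AddCommGroup E] [Module 𝕜 E]

lemma Finset.sum_smul_mem_smul_convexHull {s : Set E} (hs : s.Nonempty) {t : Finset ι}
    {w : ι → 𝕜} {z : ι → E} (hw₀ : ∀ i ∈ t, 0 ≤ w i) (hz : ∀ i ∈ t, z i ∈ s) :
    ∑ i ∈ t, w i • z i ∈ (∑ i ∈ t, w i) • convexHull 𝕜 s := by
  rcases eq_or_ne (∑ i ∈ t, w i) 0 with hw | hw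
  · have hw_zero := (Finset.sum_eq_zero_iff_of_nonneg hw₀).mp hw
    rw [hw, Set.zero_smul_set hs.convexHull, Finset.sum_eq_zero fun i hi => by
      rw [hw_zero i hi, zero_smul]]
    exact Set.zero_mem_zero
  · have hsum : ∑ i ∈ t, w i • z i = (∑ i ∈ t, w i) • t.centerMass w z := by
      rw [Finset.centerMass, smul_smul, mul_inv_cancel₀ hw, one_smul]
    rw [hsum]
    exact Set.smul_mem_smul_set
      (t.centerMass_mem_convexHull hw₀ ((Finset.sum_nonneg hw₀).lt_of_ne' hw) hz)

lemma exists_one_le_mul_of_sum_eq_one [Fintype ι] {n : ℕ} (hcard : Fintype.card ι ≤ n + 1)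
    {w : ι → 𝕜} (hw : ∑ i, w i = 1) : ∃ k, 1 ≤ ((n : 𝕜) + 1) * w k := by
  have hne : (Finset.univ : Finset ι).Nonempty :=
    Finset.nonempty_of_sum_ne_zero (hw.symm ▸ one_ne_zero)
  obtain ⟨k, -, hk⟩ := Finset.exists_le_of_sum_le hne (f := fun _ => (1 : 𝕜))
    (g := fun i => ((n : 𝕜) + 1) * w i) (by
      rw [← Finset.mul_sum, hw, mul_one, Finset.sum_const, Finset.card_univ, nsmul_one]
      exact_mod_cast hcard)
  exact ⟨k, hk⟩

variable [FiniteDimensional 𝕜 E]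

theorem smul_convexHull_subset_add_smul_convexHull {n : ℕ} (hn : Module.finrank 𝕜 E ≤ n)
    (s : Set E) : ((n : 𝕜) + 1) • convexHull 𝕜 s ⊆ s + (n : 𝕜) • convexHull 𝕜 s := by
  classical
  rintro _ ⟨x, hx, rfl⟩
  obtain ⟨ι, _, z, w, hzs, hz, hw₀, hw₁, rfl⟩ := eq_pos_convex_span_of_mem_convexHull hx
  have hcard : Fintype.card ι ≤ n + 1 := hz.card_le_finrank_succ.trans <|
    Nat.add_le_add_right ((Submodule.finrank_le _).trans hn) 1
  obtain ⟨k, hk⟩ := exists_one_le_mul_of_sum_eq_one hcard hw₁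
  -- removing `z k` once from `n + 1` copies of `x` leaves nonnegative weights summing to `n`
  set μ : ι → 𝕜 := fun i => ((n : 𝕜) + 1) * w i - Pi.single (M := fun _ => 𝕜) k 1 i
  have hμ₀ : ∀ i ∈ Finset.univ, 0 ≤ μ i := by
    intro i _
    rcases eq_or_ne i k with rfl | hik
    · simpa [μ] using hk
    · simpa [μ, hik] using mul_nonneg (by positivity) (hw₀ i).le
  have hμ_sum : ∑ i, μ i = n := by
    simp [μ, Finset.sum_sub_distrib, ← Finset.mul_sum, hw₁]
  have hμ_smul : ∑ i, μ i • z i = ((n : 𝕜) + 1) • ∑ i, w i • z i - z k := by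
    simp [μ, sub_smul, Finset.sum_sub_distrib, mul_smul, ← Finset.smul_sum, Pi.single_apply]
  have hmem := Finset.sum_smul_mem_smul_convexHull ⟨z k, hzs ⟨k, rfl⟩⟩ hμ₀
    fun i _ => hzs ⟨i, rfl⟩
  rw [hμ_sum, hμ_smul] at hmem
  exact ⟨z k, hzs ⟨k, rfl⟩, _, hmem, add_sub_cancel _ _⟩

theorem add_smul_convexHull_eq {n : ℕ} (hn : Module.finrank 𝕜 E ≤ n) (s : Set E) :
    s + (n : 𝕜) • convexHull 𝕜 s = ((n : 𝕜) + 1) • convexHull 𝕜 s := by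
  refine subset_antisymm ?_ (smul_convexHull_subset_add_smul_convexHull hn s)
  rw [add_comm (n : 𝕜), (convex_convexHull 𝕜 s).add_smul zero_le_one n.cast_nonneg, one_smul]
  exact Set.add_subset_add_right (subset_convexHull 𝕜 s)

theorem exists_add_sub_add_mem_smul_convexHull {n : ℕ} (hn : Module.finrank 𝕜 E ≤ n)
    {s : Set E} {x c v : E} (hx : x + c ∈ (n : 𝕜) • convexHull 𝕜 s) (hv : v ∈ convexHull 𝕜 s) :
    ∃ u ∈ s, x + v - u + c ∈ (n : 𝕜) • convexHull 𝕜 s := by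
  have hxv : x + c + v ∈ ((n : 𝕜) + 1) • convexHull 𝕜 s := by
    rw [(convex_convexHull 𝕜 s).add_smul n.cast_nonneg zero_le_one, one_smul]
    exact Set.add_mem_add hx hv
  rw [← add_smul_convexHull_eq hn] at hxv
  obtain ⟨u, hu, y, hy, hxv⟩ := hxv
  refine ⟨u, hu, ?_⟩
  convert hy using 1
  rw [← sub_eq_of_eq_add' hxv.symm]
  abel

end Convex

section Game

variable {E : Type*} [AddCommGroup E]

def greedyPosition (pick : E → E → E) : (j : ℕ) → (Fin j → E) → E
  | 0, _ => 0
  | j + 1, v =>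
    greedyPosition pick j (Fin.init v) + v (Fin.last j) -
      pick (greedyPosition pick j (Fin.init v)) (v (Fin.last j))

def greedyStrategy (pick : E → E → E) (j : ℕ) (v : Fin (j + 1) → E) : E :=
  pick (greedyPosition pick j (Fin.init v)) (v (Fin.last j))

lemma greedyPosition_eq_sum (pick : E → E → E) (v : ℕ → E) (j : ℕ) :
    greedyPosition pick j (fun i : Fin j => v i) =
      ∑ i ∈ Finset.range j, (v i - greedyStrategy pick i (fun t : Fin (i + 1) => v t)) := by
  induction j with
  | zero => rfl
  | succ j ih =>
    have hinit : Fin.init (fun i : Fin (j + 1) => v i) = fun i : Fin j => v i := rfl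
    rw [Finset.sum_range_succ, ← ih, greedyStrategy, greedyPosition, hinit, Fin.val_last]
    abel

theorem exists_strategy_of_invariant {V B : Set E} {P : E → Prop} (h₀ : P 0)
    (hstep : ∀ x, P x → ∀ v ∈ V, ∃ u ∈ B, P (x + v - u)) :
    ∃ σ : (∀ j : ℕ, (Fin (j + 1) → E) → E), ∀ v : ℕ → E, (∀ i, v i ∈ V) →
      (∀ j, σ j (fun i : Fin (j + 1) => v i) ∈ B) ∧
      ∀ j, P (∑ i ∈ Finset.range j, (v i - σ i (fun t : Fin (i + 1) => v t))) := by
  choose! pick hpick_mem hpick_inv using hstep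
  have hinv : ∀ v : ℕ → E, (∀ i, v i ∈ V) → ∀ j,
      P (greedyPosition pick j (fun i : Fin j => v i)) := by
    intro v hv j
    induction j with
    | zero => exact h₀
    | succ j ih => exact hpick_inv _ ih _ (hv j)
  refine ⟨greedyStrategy pick, fun v hv => ⟨fun j => hpick_mem _ (hinv v hv j) _ (hv j),
    fun j => ?_⟩⟩
  rw [← greedyPosition_eq_sum]
  exact hinv v hv j

end Game

theorem convex_approximation_game (d : ℕ) (B : Set (Fin d → ℝ))
    (c : Fin d → ℝ) (hc : c ∈ (d : ℝ) • convexHull ℝ B) :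
    (∀ s : Fin d → ℝ, s + c ∈ (d : ℝ) • convexHull ℝ B →
      ∀ v ∈ convexHull ℝ B, ∃ u ∈ B,
        (s + v - u) + c ∈ (d : ℝ) • convexHull ℝ B) ∧
    ∃ σ : (∀ j : ℕ, (Fin (j + 1) → (Fin d → ℝ)) → (Fin d → ℝ)),
      ∀ v : ℕ → (Fin d → ℝ), (∀ i, v i ∈ convexHull ℝ B) →
        (∀ j, σ j (fun i : Fin (j + 1) => v i) ∈ B) ∧
        ∀ j, (∑ i ∈ Finset.range (j + 1),
            (v i - σ i (fun t : Fin (i + 1) => v t))) ∈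
          (d : ℝ) • convexHull ℝ B + {-c} := by
  have hstep : ∀ s : Fin d → ℝ, s + c ∈ (d : ℝ) • convexHull ℝ B →
      ∀ v ∈ convexHull ℝ B, ∃ u ∈ B, (s + v - u) + c ∈ (d : ℝ) • convexHull ℝ B :=
    fun s hs v hv => exists_add_sub_add_mem_smul_convexHull (Module.finrank_fin_fun ℝ).le hs hv
  obtain ⟨σ, hσ⟩ := exists_strategy_of_invariant (by rwa [zero_add]) hstep
  refine ⟨hstep, σ, fun v hv => ⟨(hσ v hv).1, fun j => ?_⟩⟩
  rw [Set.add_singleton]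
  exact ⟨_, (hσ v hv).2 (j + 1), add_neg_cancel_right _ _⟩
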